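/- Let K : ℓ²(Λ) → H with ‖K‖ < 1 and β ≥ 1, and fix x ∈ B_R. The functional F_β(w; x) = ‖Kw - y‖² - ‖K(w - x)‖² + (1/β)‖w - x‖² is strictly convex in w, and its unique minimizer over B_R is P_R(x + β K*(y - Kx)). -/

import Mathlib

/-!
Completing the square (the `‖K w‖²` terms cancel) gives
`F_β(w; x) = (1/β) ‖w - u‖² + const` with `u = x + β K*(y - K x)`. So `F_β` is strongly convex,
and its minimizers over the closed convex set `B_R` are exactly the points of `B_R` nearest to `u`:
the projection theorem in the Hilbert space `ℓ²` provides one, and strict convexity makes it unique.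
-/

open scoped ENNReal NNReal

/-- The `ℓ¹`-ball of radius `R` inside `ℓ²(I)`. -/
noncomputable def l1Ball (I : Type*) (R : ℝ) : Set (lp (fun _ : I => ℝ) 2) :=
  {x | (∑' i, (‖x i‖₊ : ℝ≥0∞)) ≤ ENNReal.ofReal R}

open Set

lemma isClosed_l1Ball (I : Type*) (R : ℝ) : IsClosed (l1Ball I R) :=
  (lowerSemicontinuous_tsum fun i ↦
    (lp.evalCLM ℝ (fun _ : I ↦ ℝ) 2 i).continuous.enorm.lowerSemicontinuous).isClosed_preimage _

lemma convex_l1Ball (I : Type*) (R : ℝ) : Convex ℝ (l1Ball I R) := by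
  intro p hp q hq a b ha hb hab
  have coord (i : I) :
      ‖(a • p + b • q) i‖ₑ ≤ ENNReal.ofReal a * ‖p i‖ₑ + ENNReal.ofReal b * ‖q i‖ₑ :=
    calc ‖(a • p + b • q) i‖ₑ = ‖a • p i + b • q i‖ₑ := rfl
      _ ≤ ‖a • p i‖ₑ + ‖b • q i‖ₑ := enorm_add_le _ _
      _ = _ := by rw [enorm_smul, enorm_smul, Real.enorm_eq_ofReal ha, Real.enorm_eq_ofReal hb]
  calc ∑' i, ‖(a • p + b • q) i‖ₑ
      ≤ ∑' i, (ENNReal.ofReal a * ‖p i‖ₑ + ENNReal.ofReal b * ‖q i‖ₑ) := ENNReal.tsum_le_tsum coord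
    _ = ENNReal.ofReal a * ∑' i, ‖p i‖ₑ + ENNReal.ofReal b * ∑' i, ‖q i‖ₑ := by
      rw [ENNReal.tsum_add, ENNReal.tsum_mul_left, ENNReal.tsum_mul_left]
    _ ≤ ENNReal.ofReal a * ENNReal.ofReal R + ENNReal.ofReal b * ENNReal.ofReal R := by
      gcongr <;> assumption
    _ = ENNReal.ofReal R := by
      rw [← add_mul, ← ENNReal.ofReal_add ha hb, hab, ENNReal.ofReal_one, one_mul]

section InnerProductSpace

variable {E : Type*} [NormedAddCommGroup E]

lemma isMinOn_const_mul_norm_sub_sq_add_iff {c : ℝ} (hc : 0 < c) (C : ℝ) (u : E) (S : Set E)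
    (w : E) : IsMinOn (fun w ↦ c * ‖w - u‖ ^ 2 + C) S w ↔ IsMinOn (fun w ↦ ‖w - u‖) S w := by
  simp only [isMinOn_iff]
  refine forall₂_congr fun v _ ↦ ?_
  rw [add_le_add_iff_right, mul_le_mul_iff_right₀ hc, sq_le_sq₀ (norm_nonneg _) (norm_nonneg _)]

variable [InnerProductSpace ℝ E]

lemma strongConvexOn_const_mul_norm_sub_sq_add (c C : ℝ) (u : E) :
    StrongConvexOn univ (2 * c) fun w ↦ c * ‖w - u‖ ^ 2 + C := by
  have affine : (fun w ↦ c * ‖w - u‖ ^ 2 + C - 2 * c / 2 * ‖w‖ ^ 2)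
      = fun w ↦ ((-2 * c) • innerₗ E u) w + (c * ‖u‖ ^ 2 + C) := by
    funext w
    simp only [norm_sub_sq_real, LinearMap.smul_apply, innerₗ_apply_apply, smul_eq_mul,
      real_inner_comm u w]
    ring
  rw [strongConvexOn_iff_convex, affine]
  exact (LinearMap.convexOn _ convex_univ).add_const _

lemma exists_isMinOn_norm_sub {S : Set E} (hne : S.Nonempty) (hS : IsComplete S)
    (hconv : Convex ℝ S) (u : E) : ∃ v ∈ S, IsMinOn (fun w ↦ ‖w - u‖) S v := by
  obtain ⟨v, hv, hinf⟩ := exists_norm_eq_iInf_of_complete_convex hne hS hconv u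
  refine ⟨v, hv, fun w hw ↦ ?_⟩
  show ‖v - u‖ ≤ ‖w - u‖
  rw [norm_sub_rev, norm_sub_rev w, hinf]
  exact ciInf_le ⟨0, by rintro _ ⟨_, rfl⟩; positivity⟩ (⟨w, hw⟩ : S)

lemma existsUnique_isMinOn_const_mul_norm_sub_sq_add {c : ℝ} (hc : 0 < c) (C : ℝ) (u : E)
    {S : Set E} (hne : S.Nonempty) (hS : IsComplete S) (hconv : Convex ℝ S) :
    ∃! w, w ∈ S ∧ IsMinOn (fun w ↦ c * ‖w - u‖ ^ 2 + C) S w := by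
  obtain ⟨v, hv, hmin⟩ := exists_isMinOn_norm_sub hne hS hconv u
  rw [← isMinOn_const_mul_norm_sub_sq_add_iff hc C] at hmin
  have strict := ((strongConvexOn_const_mul_norm_sub_sq_add c C u).strictConvexOn
    (by positivity)).subset (subset_univ S) hconv
  exact ⟨v, ⟨hv, hmin⟩, fun w ⟨hw, hwmin⟩ ↦ strict.eq_of_isMinOn hwmin hmin hw hv⟩

end InnerProductSpace

lemma surrogate_eq_const_mul_norm_sub_sq_add {E H : Type*} [NormedAddCommGroup E]
    [InnerProductSpace ℝ E] [CompleteSpace E] [NormedAddCommGroup H] [InnerProductSpace ℝ H]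
    [CompleteSpace H] (K : E →L[ℝ] H) (y : H) (x : E) {β : ℝ} (hβ : β ≠ 0) (w : E) :
    ‖K w - y‖ ^ 2 - ‖K (w - x)‖ ^ 2 + (1 / β) * ‖w - x‖ ^ 2
      = (1 / β) * ‖w - (x + β • (ContinuousLinearMap.adjoint K) (y - K x))‖ ^ 2
        + (‖K x - y‖ ^ 2 - β * ‖(ContinuousLinearMap.adjoint K) (y - K x)‖ ^ 2) := by
  set z := ContinuousLinearMap.adjoint K (y - K x)
  have inner_z : inner ℝ (K (w - x)) (y - K x) = inner ℝ (w - x) z :=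
    (ContinuousLinearMap.adjoint_inner_right K (w - x) (y - K x)).symm
  have residual : ‖K w - y‖ ^ 2 = ‖K (w - x)‖ ^ 2 - 2 * inner ℝ (w - x) z + ‖K x - y‖ ^ 2 := by
    rw [show K w - y = K (w - x) - (y - K x) by rw [map_sub]; abel, norm_sub_sq_real, inner_z,
      norm_sub_rev y]
  have shifted :
      ‖w - (x + β • z)‖ ^ 2 = ‖w - x‖ ^ 2 - 2 * β * inner ℝ (w - x) z + β ^ 2 * ‖z‖ ^ 2 := by
    rw [sub_add_eq_sub_sub, norm_sub_sq_real, inner_smul_right, norm_smul, Real.norm_eq_abs,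
      mul_pow, sq_abs]
    ring
  rw [residual, shifted]
  field_simp
  ring

theorem stmt14_general {I : Type*} {H : Type*} [NormedAddCommGroup H]
    [InnerProductSpace ℝ H] [CompleteSpace H]
    (K : lp (fun _ : I => ℝ) 2 →L[ℝ] H) (y : H) (R : ℝ)
    (β : ℝ) (hβ : 1 ≤ β) (x : lp (fun _ : I => ℝ) 2) (hx : x ∈ l1Ball I R) :
    StrictConvexOn ℝ Set.univ
      (fun w : lp (fun _ : I => ℝ) 2 =>
        ‖K w - y‖ ^ 2 - ‖K (w - x)‖ ^ 2 + (1 / β) * ‖w - x‖ ^ 2) ∧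
    (∃! w : lp (fun _ : I => ℝ) 2, w ∈ l1Ball I R ∧
      ∀ v ∈ l1Ball I R,
        ‖K w - y‖ ^ 2 - ‖K (w - x)‖ ^ 2 + (1 / β) * ‖w - x‖ ^ 2 ≤
          ‖K v - y‖ ^ 2 - ‖K (v - x)‖ ^ 2 + (1 / β) * ‖v - x‖ ^ 2) ∧
    (∀ w : lp (fun _ : I => ℝ) 2,
      (w ∈ l1Ball I R ∧
        ∀ v ∈ l1Ball I R,
          ‖K w - y‖ ^ 2 - ‖K (w - x)‖ ^ 2 + (1 / β) * ‖w - x‖ ^ 2 ≤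
            ‖K v - y‖ ^ 2 - ‖K (v - x)‖ ^ 2 + (1 / β) * ‖v - x‖ ^ 2) →
      ∀ v ∈ l1Ball I R,
        ‖w - (x + β • (ContinuousLinearMap.adjoint K) (y - K x))‖ ≤
          ‖v - (x + β • (ContinuousLinearMap.adjoint K) (y - K x))‖) := by
  have hβ₀ : 0 < 1 / β := by positivity
  simp only [surrogate_eq_const_mul_norm_sub_sq_add K y x (by positivity : β ≠ 0)]
  refine ⟨(strongConvexOn_const_mul_norm_sub_sq_add _ _ _).strictConvexOn (by positivity),
    existsUnique_isMinOn_const_mul_norm_sub_sq_add hβ₀ _ _ ⟨x, hx⟩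
      (isClosed_l1Ball I R).isComplete (convex_l1Ball I R),
    fun w ⟨_, hmin⟩ ↦ (isMinOn_const_mul_norm_sub_sq_add_iff hβ₀ _ _ _ w).1 hmin⟩

/-- For `‖K‖ < 1`, `β ≥ 1` and fixed `x ∈ B_R`, the functional
`F_β(w; x) = ‖Kw - y‖² - ‖K(w - x)‖² + (1/β)‖w - x‖²` is strictly convex in `w`, it has a
unique minimizer over `B_R`, and this minimizer is the `ℓ²` projection of
`x + β K*(y - Kx)` onto `B_R` (i.e. the closest point of `B_R` to it). -/
theorem stmt14 {I : Type*} [Countable I] {H : Type*} [NormedAddCommGroup H]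
    [InnerProductSpace ℝ H] [CompleteSpace H]
    (K : lp (fun _ : I => ℝ) 2 →L[ℝ] H) (hK : ‖K‖ < 1) (y : H) (R : ℝ) (hR : 0 < R)
    (β : ℝ) (hβ : 1 ≤ β) (x : lp (fun _ : I => ℝ) 2) (hx : x ∈ l1Ball I R) :
    StrictConvexOn ℝ Set.univ
      (fun w : lp (fun _ : I => ℝ) 2 =>
        ‖K w - y‖ ^ 2 - ‖K (w - x)‖ ^ 2 + (1 / β) * ‖w - x‖ ^ 2) ∧
    (∃! w : lp (fun _ : I => ℝ) 2, w ∈ l1Ball I R ∧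
      ∀ v ∈ l1Ball I R,
        ‖K w - y‖ ^ 2 - ‖K (w - x)‖ ^ 2 + (1 / β) * ‖w - x‖ ^ 2 ≤
          ‖K v - y‖ ^ 2 - ‖K (v - x)‖ ^ 2 + (1 / β) * ‖v - x‖ ^ 2) ∧
    (∀ w : lp (fun _ : I => ℝ) 2,
      (w ∈ l1Ball I R ∧
        ∀ v ∈ l1Ball I R,
          ‖K w - y‖ ^ 2 - ‖K (w - x)‖ ^ 2 + (1 / β) * ‖w - x‖ ^ 2 ≤
            ‖K v - y‖ ^ 2 - ‖K (v - x)‖ ^ 2 + (1 / β) * ‖v - x‖ ^ 2) →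
      ∀ v ∈ l1Ball I R,
        ‖w - (x + β • (ContinuousLinearMap.adjoint K) (y - K x))‖ ≤
          ‖v - (x + β • (ContinuousLinearMap.adjoint K) (y - K x))‖) :=
  stmt14_general K y R β hβ x hx
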